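/- arXiv:2307.01590 — 3 statements merged into one kernel-verified Lean document; each statement's English description precedes it below -/
import Mathlib

section
/- Let B be a complex Banach algebra (not assumed unital) with submultiplicative norm, and let M be a Banach left B-module. Assume B possesses a bounded left approximate identity for (B,M) of order r > 0. Then for every f ∈ M and every ε > 0 there exist an element ψ ∈ B with ‖ψ‖_B ≤ r and an element g belonging to the closure in M of the set {φ·f : φ ∈ B} such that f = ψ·g and ‖f − g‖_M < ε. (This is the Banach-space case, order p = 1, of the paper's Theorem on factorization in quasi-Banach modules; for p = 1 the radius r₀ = r/((2r+1)^p − (2r)^p)^{1/p} equals r.) -/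
set_option linter.unusedSectionVars false
set_option maxHeartbeats 1000000


/-- Quasi-inverse via geometric series in a complete non-unital normed ring. -/
lemma geom_quasi_inv {B : Type*} [NonUnitalNormedRing B] [CompleteSpace B]
    (z : B) (hz : ‖z‖ ≤ 3/4) :
    ∃ u : B, u + z + u * z = 0 ∧ u + z + z * u = 0 ∧ ‖u‖ ≤ 3 := by
  let q : ℕ → B := fun n => Nat.rec (-z) (fun _ s => -(z * s)) n
  have hq0 : q 0 = -z := rfl
  have hqs : ∀ n, q (n+1) = -(z * q n) := fun n => rfl
  have hgeo : HasSum (fun n : ℕ => (3/4 : ℝ)^(n+1)) 3 := by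
    have h := (hasSum_geometric_of_lt_one (by norm_num : (0:ℝ) ≤ 3/4) (by norm_num)).mul_left (3/4 : ℝ)
    have h2 : (3/4 : ℝ) * (1 - 3/4)⁻¹ = 3 := by norm_num
    rw [h2] at h
    exact h.congr_fun (fun n => by rw [pow_succ]; ring)
  have hqnorm : ∀ n, ‖q n‖ ≤ (3/4) ^ (n+1) := by
    intro n
    induction n with
    | zero => rw [hq0, norm_neg]; simpa using hz
    | succ n ih =>
      rw [hqs, norm_neg]
      calc ‖z * q n‖ ≤ ‖z‖ * ‖q n‖ := norm_mul_le _ _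
        _ ≤ (3/4) * (3/4)^(n+1) := by
            apply mul_le_mul hz ih (norm_nonneg _) (by norm_num)
        _ = (3/4)^(n+1+1) := by ring
  have hsum : Summable q :=
    Summable.of_norm_bounded hgeo.summable hqnorm
  have key : (∑' n, q n) + z + z * (∑' n, q n) = 0 := by
    have h1 : z * (∑' n, q n) = ∑' n, z * q n := (hsum.tsum_mul_left z).symm
    have h2 : ∑' n, z * q n = ∑' n, -(q (n+1)) := tsum_congr (fun n => by rw [hqs, neg_neg])
    have h3 : ∑' n, -(q (n+1)) = - ∑' n, q (n+1) := tsum_neg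
    have h4 : ∑' n, q n = q 0 + ∑' n, q (n+1) := Summable.tsum_eq_zero_add hsum
    rw [h1, h2, h3]
    rw [h4, hq0]
    abel
  refine ⟨∑' n, q n, ?_, key, ?_⟩
  · have hcomm : ∀ n, q n * z = z * q n := by
      intro n
      induction n with
      | zero => rw [hq0, neg_mul, mul_neg]
      | succ n ih => rw [hqs, neg_mul, mul_assoc, ih, mul_neg]
    have huz : (∑' n, q n) * z = z * ∑' n, q n := by
      rw [← hsum.tsum_mul_left z, ← hsum.tsum_mul_right z]
      exact tsum_congr hcomm
    rw [huz]; exact key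
  · exact tsum_of_norm_bounded hgeo hqnorm

namespace CFaux


variable {B M : Type*} [NonUnitalNormedRing B] [NormedSpace ℂ B]
  [IsScalarTower ℂ B B] [SMulCommClass ℂ B B]
  [NormedAddCommGroup M] [NormedSpace ℂ M]

lemma Usmul_mul (t : ℂ) (x y : Unitization ℂ B) : (t • x) * y = t • (x * y) := by
  apply Unitization.ext
  · simp [smul_eq_mul]; ring
  · simp [Unitization.snd_mul, smul_add, smul_smul, smul_mul_assoc, mul_comm]

lemma Umul_smul (t : ℂ) (x y : Unitization ℂ B) : x * (t • y) = t • (x * y) := by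
  apply Unitization.ext
  · simp [smul_eq_mul]; ring
  · simp [Unitization.snd_mul, smul_add, smul_smul, mul_smul_comm, mul_comm]

noncomputable def S (c : ℝ) (n : ℕ) : ℂ := ((1 - c : ℝ) : ℂ) ^ n

noncomputable def aU (c : ℝ) (n : ℕ) (b : B) : Unitization ℂ B :=
  S c n • 1 + Unitization.inr b

noncomputable def aI (c : ℝ) (n : ℕ) (v : B) : Unitization ℂ B :=
  (S c n)⁻¹ • (1 + Unitization.inr v)

@[simp] lemma aU_fst (c : ℝ) (n : ℕ) (b : B) : (aU c n b).fst = S c n := by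
  simp [aU, smul_eq_mul]

@[simp] lemma aU_snd (c : ℝ) (n : ℕ) (b : B) : (aU c n b).snd = b := by
  simp [aU]

@[simp] lemma aI_fst (c : ℝ) (n : ℕ) (v : B) : (aI c n v).fst = (S c n)⁻¹ := by
  simp [aI, smul_eq_mul]

@[simp] lemma aI_snd (c : ℝ) (n : ℕ) (v : B) : (aI c n v).snd = (S c n)⁻¹ • v := by
  simp [aI]

lemma S_ne_zero {c : ℝ} (h : c < 1) (n : ℕ) : S c n ≠ 0 := by
  simp only [S]
  apply pow_ne_zero
  simp only [ne_eq, Complex.ofReal_eq_zero]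
  linarith

lemma norm_S {c : ℝ} (h : c < 1) (n : ℕ) : ‖S c n‖ = (1-c)^n := by
  simp only [S]
  rw [norm_pow, Complex.norm_real, Real.norm_eq_abs, abs_of_pos (by linarith)]

lemma S_succ (c : ℝ) (n : ℕ) : S c (n+1) = ((1-c:ℝ):ℂ) * S c n := by
  simp [S, pow_succ]; ring

/-- Extraction of the second-component relation from invertibility. -/
lemma E2_of_inv {c : ℝ} (hc : c < 1) {n : ℕ} {b v : B}
    (h : aI c n v * aU c n b = 1) :
    S c n • v + b + v * b = 0 := by
  have hP : (1 + Unitization.inr v) * (S c n • (1 : Unitization ℂ B) + Unitization.inr b)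
      = S c n • 1 := by
    have h2 : (S c n)⁻¹ • ((1 + Unitization.inr v) * (S c n • (1:Unitization ℂ B) + Unitization.inr b)) = 1 := by
      rw [← Usmul_mul]; exact h
    have h3 := congrArg (fun x => S c n • x) h2
    simpa [smul_smul, mul_inv_cancel₀ (S_ne_zero hc n)] using h3
  have h4 := congrArg (fun x : Unitization ℂ B => x.snd) hP
  simpa [Unitization.snd_mul, Unitization.snd_one, add_comm, add_left_comm, add_assoc,
    add_eq_zero_iff_neg_eq] using h4




noncomputable def Act (act : B → M → M) (x : Unitization ℂ B) (m : M) : M :=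
  x.fst • m + act x.snd m

lemma act_zero (act : B → M → M)
    (add_act : ∀ (φ ψ : B) (f : M), act (φ + ψ) f = act φ f + act ψ f)
    (m : M) : act 0 m = 0 := by
  have h := add_act 0 0 m
  rw [add_zero] at h
  exact (right_eq_add.mp h)

lemma act_smul' (act : B → M → M)
    (smul_act : ∀ (c : ℂ) (φ : B) (f : M), act (c • φ) f = c • act φ f)
    (t : ℂ) (φ : B) (m : M) : act (t • φ) m = t • act φ m := smul_act t φ m

lemma act_sub (act : B → M → M)
    (add_act : ∀ (φ ψ : B) (f : M), act (φ + ψ) f = act φ f + act ψ f)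
    (smul_act : ∀ (c : ℂ) (φ : B) (f : M), act (c • φ) f = c • act φ f)
    (φ ψ : B) (m : M) : act (φ - ψ) m = act φ m - act ψ m := by
  have hneg : act (-ψ) m = - act ψ m := by
    have := smul_act (-1) ψ m
    simpa [neg_one_smul] using this
  rw [sub_eq_add_neg, add_act, hneg, sub_eq_add_neg]

lemma Act_one (act : B → M → M)
    (add_act : ∀ (φ ψ : B) (f : M), act (φ + ψ) f = act φ f + act ψ f)
    (m : M) : Act act 1 m = m := by
  simp [Act, act_zero act add_act]

lemma Act_mul (act : B → M → M)
    (add_act : ∀ (φ ψ : B) (f : M), act (φ + ψ) f = act φ f + act ψ f)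
    (mul_act : ∀ (φ ψ : B) (f : M), act (φ * ψ) f = act φ (act ψ f))
    (smul_act : ∀ (c : ℂ) (φ : B) (f : M), act (c • φ) f = c • act φ f)
    (act_add : ∀ (φ : B) (f g : M), act φ (f + g) = act φ f + act φ g)
    (act_smul : ∀ (c : ℂ) (φ : B) (f : M), act φ (c • f) = c • act φ f)
    (x y : Unitization ℂ B) (m : M) :
    Act act (x * y) m = Act act x (Act act y m) := by
  simp only [Act, Unitization.fst_mul, Unitization.snd_mul]
  rw [add_act, add_act, smul_act, smul_act, mul_act, act_add, act_smul, smul_add, smul_smul]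
  abel

lemma Act_add_right (act : B → M → M)
    (act_add : ∀ (φ : B) (f g : M), act φ (f + g) = act φ f + act φ g)
    (x : Unitization ℂ B) (m m' : M) :
    Act act x (m + m') = Act act x m + Act act x m' := by
  simp only [Act, act_add, smul_add]; abel

lemma Act_smul_right (act : B → M → M)
    (act_smul : ∀ (c : ℂ) (φ : B) (f : M), act φ (c • f) = c • act φ f)
    (t : ℂ) (x : Unitization ℂ B) (m : M) :
    Act act x (t • m) = t • Act act x m := by
  simp only [Act, act_smul, smul_add, smul_smul, mul_comm]

lemma norm_Act (act : B → M → M)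
    (norm_act : ∀ (φ : B) (f : M), ‖act φ f‖ ≤ ‖φ‖ * ‖f‖)
    (x : Unitization ℂ B) (m : M) :
    ‖Act act x m‖ ≤ (‖x.fst‖ + ‖x.snd‖) * ‖m‖ := by
  calc ‖Act act x m‖ ≤ ‖x.fst • m‖ + ‖act x.snd m‖ := norm_add_le _ _
    _ ≤ ‖x.fst‖ * ‖m‖ + ‖x.snd‖ * ‖m‖ := by
        gcongr
        · rw [norm_smul]
        · exact norm_act _ _
    _ = (‖x.fst‖ + ‖x.snd‖) * ‖m‖ := by ring


lemma norm_S_inv {c : ℝ} (h : c < 1) (n : ℕ) : ‖(S c n)⁻¹‖ = ((1-c)^n)⁻¹ := by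
  rw [norm_inv, norm_S h]

/-- The inductive step of the Cohen factorization construction. -/
lemma step [CompleteSpace B]
    (act : B → M → M)
    (act_add : ∀ (φ : B) (f g : M), act φ (f + g) = act φ f + act φ g)
    (add_act : ∀ (φ ψ : B) (f : M), act (φ + ψ) f = act φ f + act ψ f)
    (mul_act : ∀ (φ ψ : B) (f : M), act (φ * ψ) f = act φ (act ψ f))
    (smul_act : ∀ (c : ℂ) (φ : B) (f : M), act (c • φ) f = c • act φ f)
    (act_smul : ∀ (c : ℂ) (φ : B) (f : M), act φ (c • f) = c • act φ f)
    (norm_act : ∀ (φ : B) (f : M), ‖act φ f‖ ≤ ‖φ‖ * ‖f‖)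
    (r : ℝ) (hr : 0 < r)
    (hai : ∀ ε : ℝ, 0 < ε → ∀ Sf : Finset B, ∀ f : M, ∃ φ : B, ‖φ‖ ≤ r ∧
      (∀ ψ ∈ Sf, ‖φ * ψ - ψ‖ < ε) ∧ ‖act φ f - f‖ < ε)
    (f : M) (ε : ℝ) (hε : 0 < ε)
    (c : ℝ) (hcdef : c = 1/(2*(r+1)))
    (n : ℕ) (b v : B)
    (hb : ‖b‖ ≤ r * (1 - (1-c)^n))
    (h1 : aU c n b * aI c n v = 1)
    (h2 : aI c n v * aU c n b = 1) :
    ∃ b' v' : B,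
      (‖b'‖ ≤ r * (1 - (1-c)^(n+1)) ∧ aU c (n+1) b' * aI c (n+1) v' = 1 ∧
        aI c (n+1) v' * aU c (n+1) b' = 1)
      ∧ ‖b' - b‖ ≤ r * c * (1-c)^n
      ∧ ‖Act act (aI c (n+1) v') f - Act act (aI c n v) f‖ ≤ ε/4 * (1/2)^n := by
  have hc0 : 0 < c := by rw [hcdef]; positivity
  have hc1 : c < 1 := by rw [hcdef]; rw [div_lt_one (by linarith)]; linarith
  have h1c : 0 < 1 - c := by linarith
  have hcr : c * (r + 1) = 1/2 := by rw [hcdef]; field_simp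
  have hpow : 0 < (1-c)^n := pow_pos h1c n
  have hSn0 : S c n ≠ 0 := S_ne_zero hc1 n
  set ρ : ℂ := 1 - (c:ℂ) with hρdef
  have hρ0 : ρ ≠ 0 := by
    rw [hρdef, sub_ne_zero]
    intro h
    have := congrArg Complex.re h
    simp at this
    linarith
  have hρcast : ((1-c : ℝ) : ℂ) = ρ := by rw [hρdef]; push_cast; ring
  have hSsucc : S c (n+1) = ρ * S c n := by rw [S_succ, hρcast]
  -- the relation E2
  have E2 : S c n • v + b + v * b = 0 := E2_of_inv hc1 h2
  -- choose δ
  set δ : ℝ := min (1/(4*c)) (ε/4 * (1/2)^n * (1-c) / (c * (4*‖v‖+4) + 1)) with hδdef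
  have hδ0 : 0 < δ := lt_min (by positivity) (by positivity)
  have hδ1 : δ ≤ 1/(4*c) := min_le_left _ _
  have hδ2 : δ ≤ ε/4 * (1/2)^n * (1-c) / (c * (4*‖v‖+4) + 1) := min_le_right _ _
  -- the approximate identity element
  set g : M := Act act (aI c n v) f with hgdef
  obtain ⟨e, he_r, he_S, he_g⟩ := hai δ hδ0 {v} g
  have he_v : ‖e * v - v‖ < δ := he_S v (Finset.mem_singleton_self v)
  -- the perturbation z and its quasi-inverse u
  set μ : ℂ := ((c / (1-c) : ℝ) : ℂ) with hμdef
  have hμ : (1 - (c:ℂ)) * μ = (c:ℂ) := by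
    rw [hμdef]
    have : (1 - (c:ℂ)) = ((1-c:ℝ):ℂ) := by push_cast; ring
    rw [this, ← Complex.ofReal_mul]
    norm_cast
    field_simp
  set z : B := μ • (e + (e * v - v)) with hzdef
  have hznorm : ‖z‖ ≤ 3/4 := by
    have hn1 : ‖z‖ ≤ (c/(1-c)) * (r + δ) := by
      rw [hzdef, norm_smul, hμdef, Complex.norm_real, Real.norm_eq_abs,
        abs_of_pos (by positivity)]
      gcongr
      calc ‖e + (e*v - v)‖ ≤ ‖e‖ + ‖e*v - v‖ := norm_add_le _ _
        _ ≤ r + δ := add_le_add he_r he_v.le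
    have hn2 : (c/(1-c)) * (r + δ) ≤ 3/4 := by
      rw [div_mul_eq_mul_div, div_le_iff₀ h1c]
      have hcd : c * δ ≤ 1/4 := by
        have h := mul_le_mul_of_nonneg_left hδ1 hc0.le
        have h2 : c * (1/(4*c)) = 1/4 := by field_simp
        linarith
      nlinarith
    linarith
  obtain ⟨u, hu1, hu2, hu3⟩ := geom_quasi_inv z hznorm
  -- the new pair
  set τ : ℂ := ((c:ℝ):ℂ) * S c n with hτdef
  set b' : B := b + τ • e with hb'def
  set v' : B := v + u + v * u with hv'def
  have hτnorm : ‖τ‖ = c * (1-c)^n := by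
    rw [hτdef, norm_mul, Complex.norm_real, Real.norm_eq_abs, abs_of_pos hc0, norm_S hc1]
  have hexpand : ∀ x y : B, ((1 : Unitization ℂ B) + Unitization.inr x) * (1 + Unitization.inr y)
      = 1 + Unitization.inr (x + y + x * y) := by
    intro x y
    have : ((1 : Unitization ℂ B) + Unitization.inr x) * (1 + Unitization.inr y)
        = 1 + (Unitization.inr x + Unitization.inr y + Unitization.inr x * Unitization.inr y) := by
      noncomm_ring
    rw [this, ← Unitization.inr_mul, ← Unitization.inr_add, ← Unitization.inr_add]
  have hWZ : ((1 : Unitization ℂ B) + Unitization.inr u) * (1 + Unitization.inr z) = 1 := by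
    rw [hexpand, hu1, Unitization.inr_zero, add_zero]
  have hZW : ((1 : Unitization ℂ B) + Unitization.inr z) * (1 + Unitization.inr u) = 1 := by
    rw [hexpand]
    have hz' : z + u + z * u = 0 := by rw [← hu2]; abel
    rw [hz', Unitization.inr_zero, add_zero]
  -- Claim A : the new aU factors through the old one
  have hvb : v * b = -(S c n • v) - b := by
    have h := eq_neg_of_add_eq_zero_right E2
    rw [h, neg_add, ← sub_eq_add_neg]
  have hevb : e * (v * b) = -(S c n • (e * v)) - e * b := by
    rw [hvb, mul_sub, mul_neg, mul_smul_comm]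
  have claimA : aU c (n+1) b' = ρ • ((1 + Unitization.inr z) * aU c n b) := by
    apply Unitization.ext
    · simp only [aU_fst, Unitization.fst_smul, Unitization.fst_mul, Unitization.fst_add,
        Unitization.fst_one, Unitization.fst_inr, smul_eq_mul]
      rw [hSsucc]; ring
    · simp only [aU_snd, Unitization.snd_smul, Unitization.snd_mul, Unitization.snd_add,
        Unitization.snd_one, Unitization.snd_inr, Unitization.fst_add, Unitization.fst_one,
        Unitization.fst_inr, aU_fst, smul_zero, zero_mul, mul_zero, add_zero, zero_add,
        one_smul]
      rw [hb'def, hzdef, hτdef, smul_mul_assoc, add_mul, sub_mul, mul_assoc, hevb, hvb]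
      have hρ0' : (1 : ℂ) - (c:ℂ) ≠ 0 := hρ0
      match_scalars
      all_goals (try ring)
      all_goals (simp only [hμdef]; push_cast; field_simp; ring)
  -- Claim B : the new aI factors through the old one
  have claimB : aI c (n+1) v' = ρ⁻¹ • (aI c n v * (1 + Unitization.inr u)) := by
    have hprod : ((1 : Unitization ℂ B) + Unitization.inr v) * (1 + Unitization.inr u)
        = 1 + Unitization.inr v' := by
      rw [hexpand, hv'def]
    simp only [aI]
    rw [Usmul_mul, hprod, smul_smul, hSsucc, mul_inv]
  -- new invertibility
  have hiv1' : aU c (n+1) b' * aI c (n+1) v' = 1 := by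
    rw [claimA, claimB, Usmul_mul, Umul_smul, smul_smul, mul_inv_cancel₀ hρ0, one_smul,
      mul_assoc, ← mul_assoc (aU c n b), h1, one_mul, hZW]
  have hiv2' : aI c (n+1) v' * aU c (n+1) b' = 1 := by
    rw [claimA, claimB, Usmul_mul, Umul_smul, smul_smul, inv_mul_cancel₀ hρ0, one_smul,
      mul_assoc, ← mul_assoc (1 + Unitization.inr u), hWZ, one_mul, h2]
  -- norm bound for b'
  have he0 : ‖τ • e‖ ≤ r * c * (1-c)^n := by
    rw [norm_smul, hτnorm]
    calc c * (1-c)^n * ‖e‖ ≤ c * (1-c)^n * r := by gcongr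
      _ = r * c * (1-c)^n := by ring
  have hbnew : ‖b'‖ ≤ r * (1 - (1-c)^(n+1)) := by
    calc ‖b'‖ ≤ ‖b‖ + ‖τ • e‖ := norm_add_le _ _
      _ ≤ r * (1 - (1-c)^n) + r * c * (1-c)^n := by gcongr
      _ = r * (1 - (1-c)^(n+1)) := by rw [pow_succ]; ring
  have hdb : ‖b' - b‖ ≤ r * c * (1-c)^n := by
    rw [hb'def, add_sub_cancel_left]
    exact he0
  -- the analytic estimate
  have hgU : Act act (aU c n b) g = f := by
    rw [hgdef, ← Act_mul act add_act mul_act smul_act act_add act_smul, h1,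
      Act_one act add_act]
  have hf' : S c n • g + act b g = f := by
    have := hgU
    simp only [Act, aU_fst, aU_snd] at this
    exact this
  have key : Act act (aU c (n+1) b') g = f + τ • (act e g - g) := by
    simp only [Act, aU_fst, aU_snd]
    rw [hb'def, add_act, smul_act, hSsucc, ← hf', hτdef]
    have hρ0' : (1 : ℂ) - (c:ℂ) ≠ 0 := hρ0
    match_scalars
    all_goals (try ring)
    all_goals (simp only [hμdef]; push_cast; field_simp; ring)
  have hgrec : g = Act act (aI c (n+1) v') f
      + τ • Act act (aI c (n+1) v') (act e g - g) := by
    calc g = Act act (1 : Unitization ℂ B) g := (Act_one act add_act g).symm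
      _ = Act act (aI c (n+1) v' * aU c (n+1) b') g := by rw [hiv2']
      _ = Act act (aI c (n+1) v') (Act act (aU c (n+1) b') g) :=
          Act_mul act add_act mul_act smul_act act_add act_smul _ _ _
      _ = Act act (aI c (n+1) v') (f + τ • (act e g - g)) := by rw [key]
      _ = _ := by
          rw [Act_add_right act act_add, Act_smul_right act act_smul]
  have hv'norm : ‖v'‖ ≤ 4*‖v‖ + 3 := by
    calc ‖v'‖ ≤ ‖v + u‖ + ‖v * u‖ := norm_add_le _ _
      _ ≤ (‖v‖ + ‖u‖) + ‖v‖ * ‖u‖ := by gcongr; exact norm_add_le _ _; exact norm_mul_le _ _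
      _ ≤ (‖v‖ + 3) + ‖v‖ * 3 := by gcongr
      _ = 4*‖v‖ + 3 := by ring
  have hAnorm : ∀ m : M, ‖Act act (aI c (n+1) v') m‖ ≤ ((1-c)^(n+1))⁻¹ * (4*‖v‖+4) * ‖m‖ := by
    intro m
    calc ‖Act act (aI c (n+1) v') m‖
        ≤ (‖(aI c (n+1) v').fst‖ + ‖(aI c (n+1) v').snd‖) * ‖m‖ := norm_Act act norm_act _ _
      _ ≤ (((1-c)^(n+1))⁻¹ + ((1-c)^(n+1))⁻¹ * (4*‖v‖+3)) * ‖m‖ := by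
          gcongr
          · rw [aI_fst, norm_S_inv hc1]
          · rw [aI_snd, norm_smul, norm_S_inv hc1]
            gcongr
      _ = ((1-c)^(n+1))⁻¹ * (4*‖v‖+4) * ‖m‖ := by ring
  have hgd : ‖Act act (aI c (n+1) v') f - g‖ ≤ ε/4 * (1/2)^n := by
    have hstep : Act act (aI c (n+1) v') f - g
        = -(τ • Act act (aI c (n+1) v') (act e g - g)) := by
      conv_lhs => rw [hgrec]
      abel
    rw [hstep, norm_neg, norm_smul, hτnorm]
    have hb1 : ‖Act act (aI c (n+1) v') (act e g - g)‖
        ≤ ((1-c)^(n+1))⁻¹ * (4*‖v‖+4) * δ := by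
      calc ‖Act act (aI c (n+1) v') (act e g - g)‖
          ≤ ((1-c)^(n+1))⁻¹ * (4*‖v‖+4) * ‖act e g - g‖ := hAnorm _
        _ ≤ ((1-c)^(n+1))⁻¹ * (4*‖v‖+4) * δ :=
            mul_le_mul_of_nonneg_left he_g.le (by positivity)
    calc c * (1-c)^n * ‖Act act (aI c (n+1) v') (act e g - g)‖
        ≤ c * (1-c)^n * (((1-c)^(n+1))⁻¹ * (4*‖v‖+4) * δ) := by gcongr
      _ = c * (1-c)⁻¹ * (4*‖v‖+4) * δ := by
          rw [pow_succ, mul_inv]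
          have hc' : (1-c)^n ≠ 0 := hpow.ne'
          field_simp
      _ ≤ ε/4 * (1/2)^n := by
          have hD : (0:ℝ) < c * (4*‖v‖+4) + 1 := by positivity
          have hA1 : (c * (4*‖v‖+4)) * δ ≤ (c * (4*‖v‖+4) + 1) * δ := by nlinarith [hδ0]
          have hA2 : (c * (4*‖v‖+4) + 1) * δ ≤ ε/4 * (1/2)^n * (1-c) := by
            calc (c * (4*‖v‖+4) + 1) * δ
                ≤ (c * (4*‖v‖+4) + 1) * (ε/4 * (1/2)^n * (1-c) / (c*(4*‖v‖+4)+1)) := by gcongr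
              _ = ε/4 * (1/2)^n * (1-c) := by field_simp
          have h3 : c * (1-c)⁻¹ * (4*‖v‖+4) * δ = (c * (4*‖v‖+4) * δ) * (1-c)⁻¹ := by ring
          rw [h3]
          calc (c * (4*‖v‖+4) * δ) * (1-c)⁻¹
              ≤ (ε/4 * (1/2)^n * (1-c)) * (1-c)⁻¹ :=
                mul_le_mul_of_nonneg_right (hA1.trans hA2) (by positivity)
            _ = ε/4 * (1/2)^n := by field_simp
  exact ⟨b', v', ⟨hbnew, hiv1', hiv2'⟩, hdb, hgd⟩

end CFaux


/-- Hewitt-type factorization in the Banach-module case: if the complex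
Banach algebra `B` has a bounded left approximate identity of order `r` for the pair
`(B, M)`, then every `f ∈ M` factors as `f = ψ · g` with `‖ψ‖ ≤ r`,
`g ∈ closure {φ · f : φ ∈ B}` and `‖f - g‖ < ε`. -/
theorem stmt_0 {B M : Type*}
    [NonUnitalNormedRing B] [NormedSpace ℂ B] [IsScalarTower ℂ B B] [SMulCommClass ℂ B B]
    [CompleteSpace B]
    [NormedAddCommGroup M] [NormedSpace ℂ M] [CompleteSpace M]
    (act : B → M → M)
    (act_add : ∀ (φ : B) (f g : M), act φ (f + g) = act φ f + act φ g)
    (add_act : ∀ (φ ψ : B) (f : M), act (φ + ψ) f = act φ f + act ψ f)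
    (mul_act : ∀ (φ ψ : B) (f : M), act (φ * ψ) f = act φ (act ψ f))
    (smul_act : ∀ (c : ℂ) (φ : B) (f : M), act (c • φ) f = c • act φ f)
    (act_smul : ∀ (c : ℂ) (φ : B) (f : M), act φ (c • f) = c • act φ f)
    (norm_act : ∀ (φ : B) (f : M), ‖act φ f‖ ≤ ‖φ‖ * ‖f‖)
    (r : ℝ) (hr : 0 < r)
    (hai : ∀ ε : ℝ, 0 < ε → ∀ S : Finset B, ∀ f : M, ∃ φ : B, ‖φ‖ ≤ r ∧
      (∀ ψ ∈ S, ‖φ * ψ - ψ‖ < ε) ∧ ‖act φ f - f‖ < ε)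
    (f : M) (ε : ℝ) (hε : 0 < ε) :
    ∃ ψ : B, ∃ g : M, ‖ψ‖ ≤ r ∧
      g ∈ closure {m : M | ∃ φ : B, m = act φ f} ∧
      f = act ψ g ∧ ‖f - g‖ < ε := by
  classical
  set c : ℝ := 1/(2*(r+1)) with hcdef
  have hc0 : 0 < c := by rw [hcdef]; positivity
  have hc1 : c < 1 := by rw [hcdef]; rw [div_lt_one (by linarith)]; linarith
  have h1c : 0 < 1 - c := by linarith
  set Good : ℕ → B × B → Prop := fun n p =>
    ‖p.1‖ ≤ r * (1 - (1-c)^n) ∧ CFaux.aU c n p.1 * CFaux.aI c n p.2 = 1 ∧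
      CFaux.aI c n p.2 * CFaux.aU c n p.1 = 1 with hGood
  have step' : ∀ n (p : B × B), ∃ p' : B × B, Good n p →
      (Good (n+1) p' ∧ ‖p'.1 - p.1‖ ≤ r * c * (1-c)^n ∧
        ‖CFaux.Act act (CFaux.aI c (n+1) p'.2) f - CFaux.Act act (CFaux.aI c n p.2) f‖
          ≤ ε/4 * (1/2)^n) := by
    intro n p
    by_cases h : Good n p
    · obtain ⟨b', v', h1, h2, h3⟩ := CFaux.step act act_add add_act mul_act smul_act act_smul
        norm_act r hr hai f ε hε c hcdef n p.1 p.2 h.1 h.2.1 h.2.2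
      exact ⟨(b', v'), fun _ => ⟨⟨h1.1, h1.2.1, h1.2.2⟩, h2, h3⟩⟩
    · exact ⟨p, fun h' => absurd h' h⟩
  choose F hF using step'
  let sq : ℕ → B × B := fun n => Nat.rec ((0:B), (0:B)) (fun k s => F k s) n
  have hsq0 : sq 0 = ((0:B), (0:B)) := rfl
  have hsqS : ∀ n, sq (n+1) = F n (sq n) := fun _ => rfl
  have hGood0 : Good 0 ((0:B), (0:B)) := by
    refine ⟨by simp, ?_, ?_⟩ <;>
      simp [CFaux.aU, CFaux.aI, CFaux.S]
  have good : ∀ n, Good n (sq n) := by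
    intro n
    induction n with
    | zero => exact hGood0
    | succ n ih =>
      rw [hsqS]
      exact (hF n (sq n) ih).1
  -- the sequences
  set bs : ℕ → B := fun n => (sq n).1 with hbs
  set gs : ℕ → M := fun n => CFaux.Act act (CFaux.aI c n (sq n).2) f with hgs
  have hbd : ∀ n, dist (bs n) (bs (n+1)) ≤ (r*c) * (1-c)^n := by
    intro n
    rw [dist_eq_norm, norm_sub_rev]
    have := (hF n (sq n) (good n)).2.1
    rw [← hsqS n] at this
    exact this
  have hgd : ∀ n, dist (gs n) (gs (n+1)) ≤ (ε/4) * (1/2)^n := by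
    intro n
    rw [dist_eq_norm, norm_sub_rev]
    have := (hF n (sq n) (good n)).2.2
    rw [← hsqS n] at this
    exact this
  obtain ⟨ψ, hψ⟩ := cauchySeq_tendsto_of_complete
    (cauchySeq_of_le_geometric (1-c) (r*c) (by linarith) hbd)
  obtain ⟨gL, hgL⟩ := cauchySeq_tendsto_of_complete
    (cauchySeq_of_le_geometric (1/2) (ε/4) (by norm_num) hgd)
  -- bound on ψ
  have hψnorm : ‖ψ‖ ≤ r := by
    apply le_of_tendsto hψ.norm
    apply Filter.Eventually.of_forall
    intro n
    have h1 := (good n).1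
    have h2 : (0:ℝ) ≤ (1-c)^n := pow_nonneg h1c.le n
    nlinarith
  -- gs 0 = f
  have hgs0 : gs 0 = f := by
    have h1 : CFaux.aI c 0 ((sq 0).2) = 1 := by
      rw [hsq0]
      simp [CFaux.aI, CFaux.S]
    rw [hgs]
    simp only [h1]
    exact CFaux.Act_one act add_act f
  -- distance estimate
  have hdist : ‖f - gL‖ < ε := by
    have h1 := dist_le_of_le_geometric_of_tendsto₀ (1/2) (ε/4) (by norm_num) hgd hgL
    rw [hgs0] at h1
    rw [← dist_eq_norm]
    calc dist f gL ≤ (ε/4) / (1 - 1/2) := h1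
      _ = ε/2 := by ring
      _ < ε := by linarith
  -- the factorization
  have act_sub_right : ∀ (φ : B) (x y : M), act φ (x - y) = act φ x - act φ y := by
    intro φ x y
    have hneg : act φ (-y) = - act φ y := by
      have := act_smul (-1) φ y
      simpa [neg_one_smul] using this
    rw [sub_eq_add_neg, act_add, hneg, sub_eq_add_neg]
  have hfn : ∀ n, CFaux.S c n • gs n + act (bs n) (gs n) = f := by
    intro n
    have h1 : CFaux.Act act (CFaux.aU c n (bs n)) (gs n) = f := by
      rw [hgs, ← CFaux.Act_mul act add_act mul_act smul_act act_add act_smul,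
        (good n).2.1, CFaux.Act_one act add_act]
    simpa [CFaux.Act] using h1
  have hS0 : Filter.Tendsto (fun n => CFaux.S c n • gs n) Filter.atTop (nhds 0) := by
    have h1 : Filter.Tendsto (fun n => CFaux.S c n) Filter.atTop (nhds 0) := by
      apply tendsto_pow_atTop_nhds_zero_of_norm_lt_one
      rw [Complex.norm_real, Real.norm_eq_abs, abs_of_pos h1c]
      linarith
    have := h1.smul hgL
    simpa using this
  have hact : Filter.Tendsto (fun n => act (bs n) (gs n)) Filter.atTop (nhds (act ψ gL)) := by
    rw [tendsto_iff_norm_sub_tendsto_zero]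
    have hbound : ∀ n, ‖act (bs n) (gs n) - act ψ gL‖
        ≤ ‖bs n - ψ‖ * ‖gs n‖ + ‖ψ‖ * ‖gs n - gL‖ := by
      intro n
      have hid : act (bs n) (gs n) - act ψ gL
          = act (bs n - ψ) (gs n) + act ψ (gs n - gL) := by
        rw [CFaux.act_sub act add_act smul_act, act_sub_right]
        abel
      rw [hid]
      calc ‖act (bs n - ψ) (gs n) + act ψ (gs n - gL)‖
          ≤ ‖act (bs n - ψ) (gs n)‖ + ‖act ψ (gs n - gL)‖ := norm_add_le _ _
        _ ≤ ‖bs n - ψ‖ * ‖gs n‖ + ‖ψ‖ * ‖gs n - gL‖ := by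
            gcongr <;> exact norm_act _ _
    apply squeeze_zero (fun n => norm_nonneg _) hbound
    have h1 : Filter.Tendsto (fun n => ‖bs n - ψ‖ * ‖gs n‖) Filter.atTop (nhds (0 * ‖gL‖)) :=
      (tendsto_iff_norm_sub_tendsto_zero.1 hψ).mul hgL.norm
    have h2 : Filter.Tendsto (fun n => ‖ψ‖ * ‖gs n - gL‖) Filter.atTop (nhds (‖ψ‖ * 0)) :=
      (tendsto_iff_norm_sub_tendsto_zero.1 hgL).const_mul _
    have := h1.add h2
    simpa using this
  have hfact : f = act ψ gL := by
    have h1 : Filter.Tendsto (fun n => CFaux.S c n • gs n + act (bs n) (gs n))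
        Filter.atTop (nhds (0 + act ψ gL)) := hS0.add hact
    have h2 : Filter.Tendsto (fun n => CFaux.S c n • gs n + act (bs n) (gs n))
        Filter.atTop (nhds f) := by
      simp only [hfn]
      exact tendsto_const_nhds
    have := tendsto_nhds_unique h2 h1
    rw [this, zero_add]
  -- closure membership
  set S0 : Submodule ℂ M :=
    { carrier := {m : M | ∃ φ : B, m = act φ f}
      add_mem' := by
        rintro a b ⟨φ, rfl⟩ ⟨φ', rfl⟩
        exact ⟨φ + φ', (add_act φ φ' f).symm⟩
      zero_mem' := ⟨0, (CFaux.act_zero act add_act f).symm⟩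
      smul_mem' := by
        rintro t a ⟨φ, rfl⟩
        exact ⟨t • φ, (smul_act t φ f).symm⟩ } with hS0def
  have hfT : f ∈ S0.topologicalClosure := by
    rw [← SetLike.mem_coe, Submodule.topologicalClosure_coe]
    apply Metric.mem_closure_iff.2
    intro δ hδ
    obtain ⟨φ, _, _, hφ⟩ := hai δ hδ ∅ f
    exact ⟨act φ f, ⟨φ, rfl⟩, by rw [dist_eq_norm, norm_sub_rev]; exact hφ⟩
  have hgsT : ∀ n, gs n ∈ S0.topologicalClosure := by
    intro n
    have hexp : gs n = (CFaux.S c n)⁻¹ • f + act ((CFaux.S c n)⁻¹ • (sq n).2) f := by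
      rw [hgs]
      simp [CFaux.Act]
    rw [hexp]
    exact Submodule.add_mem _ (Submodule.smul_mem _ _ hfT)
      (Submodule.le_topologicalClosure S0 ⟨(CFaux.S c n)⁻¹ • (sq n).2, rfl⟩)
  have hgT : gL ∈ S0.topologicalClosure :=
    S0.isClosed_topologicalClosure.mem_of_tendsto hgL (Filter.Eventually.of_forall hgsT)
  have hclosure : gL ∈ closure {m : M | ∃ φ : B, m = act φ f} := by
    have h1 : (S0 : Set M) = {m : M | ∃ φ : B, m = act φ f} := rfl
    rw [← h1, ← Submodule.topologicalClosure_coe]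
    exact hgT
  exact ⟨ψ, gL, hψnorm, hclosure, hfact, hdist⟩
end

section
/- Let B be a complex Banach algebra with submultiplicative norm and M a Banach left B-module. Let r ∈ [1,∞), let φ ∈ B satisfy ‖φ‖_B ≤ r, and let f ∈ M. Then the series T_φ f := ((2r+1)/(2r)) ( f + ∑_{k=1}^∞ (−1)^k (2r)^{−k} φ^k · f ) converges absolutely in M, the element u = T_φ f satisfies (2r/(2r+1)) u + (1/(2r+1)) φ·u = f (i.e. T_φ inverts the map g ↦ (2r/(2r+1)) g + (1/(2r+1)) φ·g), and ‖T_φ f − f‖_M ≤ ((2r+1)/r) ‖φ·f − f‖_M. (Banach-space case p = 1 of the paper's key inversion lemma.) -/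
/-- Positive powers in a (possibly non-unital) multiplicative structure:
`nupow φ k = φ^(k+1)`. -/
def nupow {B : Type*} [Mul B] (φ : B) : ℕ → B
  | 0 => φ
  | n + 1 => φ * nupow φ n

lemma nupow_norm_le {B : Type*} [NonUnitalNormedRing B] (φ : B) (k : ℕ) :
    ‖nupow φ k‖ ≤ ‖φ‖ ^ (k + 1) := by
  induction k with
  | zero => simp [nupow]
  | succ n ih =>
      calc ‖nupow φ (n + 1)‖ = ‖φ * nupow φ n‖ := rfl
        _ ≤ ‖φ‖ * ‖nupow φ n‖ := norm_mul_le _ _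
        _ ≤ ‖φ‖ * ‖φ‖ ^ (n + 1) := by
            exact mul_le_mul_of_nonneg_left ih (norm_nonneg _)
        _ = ‖φ‖ ^ (n + 2) := by ring

lemma nupow_mul_self {B : Type*} [NonUnitalNormedRing B] (φ : B) (k : ℕ) :
    nupow φ k * φ = φ * nupow φ k := by
  induction k with
  | zero => rfl
  | succ n ih =>
      show (φ * nupow φ n) * φ = φ * (φ * nupow φ n)
      rw [mul_assoc, ih]

/-- The key inversion lemma (Banach case `p = 1`): for `‖φ‖ ≤ r`, `r ≥ 1`,
the series `T_φ f = ((2r+1)/(2r)) (f + ∑_{k≥1} (-1)^k (2r)^{-k} φ^k · f)` converges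
absolutely, `u = T_φ f` solves `(2r/(2r+1)) u + (1/(2r+1)) φ·u = f`, and
`‖T_φ f - f‖ ≤ ((2r+1)/r) ‖φ·f - f‖`. -/
theorem stmt_2 {B M : Type*}
    [NonUnitalNormedRing B] [NormedSpace ℂ B] [IsScalarTower ℂ B B] [SMulCommClass ℂ B B]
    [CompleteSpace B]
    [NormedAddCommGroup M] [NormedSpace ℂ M] [CompleteSpace M]
    (act : B → M → M)
    (act_add : ∀ (φ : B) (f g : M), act φ (f + g) = act φ f + act φ g)
    (add_act : ∀ (φ ψ : B) (f : M), act (φ + ψ) f = act φ f + act ψ f)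
    (mul_act : ∀ (φ ψ : B) (f : M), act (φ * ψ) f = act φ (act ψ f))
    (smul_act : ∀ (c : ℂ) (φ : B) (f : M), act (c • φ) f = c • act φ f)
    (act_smul : ∀ (c : ℂ) (φ : B) (f : M), act φ (c • f) = c • act φ f)
    (norm_act : ∀ (φ : B) (f : M), ‖act φ f‖ ≤ ‖φ‖ * ‖f‖)
    (r : ℝ) (hr : 1 ≤ r) (φ : B) (hφ : ‖φ‖ ≤ r) (f : M) :
    Summable (fun k : ℕ =>
      ‖((-1 : ℝ) ^ (k + 1) * ((2 * r)⁻¹) ^ (k + 1)) • act (nupow φ k) f‖) ∧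
    (2 * r / (2 * r + 1)) • (((2 * r + 1) / (2 * r)) •
        (f + ∑' k : ℕ, ((-1 : ℝ) ^ (k + 1) * ((2 * r)⁻¹) ^ (k + 1)) • act (nupow φ k) f))
      + (2 * r + 1)⁻¹ • act φ (((2 * r + 1) / (2 * r)) •
        (f + ∑' k : ℕ, ((-1 : ℝ) ^ (k + 1) * ((2 * r)⁻¹) ^ (k + 1)) • act (nupow φ k) f))
      = f ∧
    ‖(((2 * r + 1) / (2 * r)) •
        (f + ∑' k : ℕ, ((-1 : ℝ) ^ (k + 1) * ((2 * r)⁻¹) ^ (k + 1)) • act (nupow φ k) f)) - f‖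
      ≤ ((2 * r + 1) / r) * ‖act φ f - f‖ := by
  have hr0 : (0:ℝ) < r := lt_of_lt_of_le one_pos hr
  have h2r : (0:ℝ) < 2 * r := by linarith
  have h2r0 : (2 * r : ℝ) ≠ 0 := ne_of_gt h2r
  have h2r1 : (0:ℝ) < 2 * r + 1 := by linarith
  have h2r10 : (2 * r + 1 : ℝ) ≠ 0 := ne_of_gt h2r1
  -- real smul action through complex scalars
  have act_rsmul : ∀ (c : ℝ) (ψ : B) (x : M), act ψ (c • x) = c • act ψ x := by
    intro c ψ x
    rw [← Complex.coe_smul, act_smul, Complex.coe_smul]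
  -- continuous linear maps
  set c : ℕ → ℝ := fun k => (-1 : ℝ) ^ (k + 1) * ((2 * r)⁻¹) ^ (k + 1) with hc
  set A : ℕ → M := fun k => c k • act (nupow φ k) f with hAdef
  have habs : ∀ k, |c k| = ((2 * r)⁻¹) ^ (k + 1) := by
    intro k
    rw [hc]
    rw [abs_mul, abs_pow, abs_pow, abs_neg, abs_one, one_pow, one_mul,
      abs_of_nonneg (inv_nonneg.mpr (le_of_lt h2r))]
  have hcsucc : ∀ k, c (k + 1) = -((2 * r)⁻¹ * c k) := by
    intro k
    rw [hc]
    simp only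
    rw [pow_succ ((-1:ℝ)), pow_succ ((2 * r)⁻¹ : ℝ)]
    ring
  have hFnorm : ∀ k, ‖act (nupow φ k) f‖ ≤ r ^ (k + 1) * ‖f‖ := by
    intro k
    calc ‖act (nupow φ k) f‖ ≤ ‖nupow φ k‖ * ‖f‖ := norm_act _ _
      _ ≤ ‖φ‖ ^ (k + 1) * ‖f‖ :=
          mul_le_mul_of_nonneg_right (nupow_norm_le φ k) (norm_nonneg _)
      _ ≤ r ^ (k + 1) * ‖f‖ :=
          mul_le_mul_of_nonneg_right (pow_le_pow_left₀ (norm_nonneg _) hφ _) (norm_nonneg _)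
  have hAbound : ∀ k, ‖A k‖ ≤ (‖f‖ / 2) * (1 / 2 : ℝ) ^ k := by
    intro k
    rw [hAdef, norm_smul, Real.norm_eq_abs, habs]
    calc ((2 * r)⁻¹) ^ (k + 1) * ‖act (nupow φ k) f‖
        ≤ ((2 * r)⁻¹) ^ (k + 1) * (r ^ (k + 1) * ‖f‖) := by
          exact mul_le_mul_of_nonneg_left (hFnorm k)
            (pow_nonneg (inv_nonneg.mpr (le_of_lt h2r)) _)
      _ = (‖f‖ / 2) * (1 / 2 : ℝ) ^ k := by
          have h12 : (2 * r)⁻¹ * r = 1 / 2 := by field_simp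
          rw [← mul_assoc, ← mul_pow, h12, pow_succ]
          ring
  have hgeo : Summable (fun k : ℕ => (‖f‖ / 2) * (1 / 2 : ℝ) ^ k) :=
    (summable_geometric_of_lt_one (by norm_num) (by norm_num)).mul_left _
  have hA_norm_summable : Summable (fun k => ‖A k‖) :=
    Summable.of_nonneg_of_le (fun k => norm_nonneg _) hAbound hgeo
  have hA_summable : Summable A := hA_norm_summable.of_norm
  refine ⟨hA_norm_summable, ?_⟩
  set S : M := ∑' k : ℕ, A k with hS
  -- the continuous linear map given by act ψ
  have mkL : ∀ ψ : B, ∃ L : M →L[ℂ] M, ∀ x, L x = act ψ x := by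
    intro ψ
    refine ⟨LinearMap.mkContinuous
      { toFun := act ψ, map_add' := act_add ψ, map_smul' := fun a x => act_smul a ψ x }
      ‖ψ‖ (fun x => norm_act ψ x), fun x => rfl⟩
  obtain ⟨Lφ, hLφ⟩ := mkL φ
  -- act φ of the sum
  have hFsucc : ∀ k, act φ (act (nupow φ k) f) = act (nupow φ (k + 1)) f := by
    intro k
    rw [show nupow φ (k + 1) = φ * nupow φ k from rfl, mul_act]
  have hactA : ∀ k, act φ (A k) = (-(2 * r)) • A (k + 1) := by
    intro k
    rw [hAdef]
    simp only
    rw [act_rsmul, hFsucc, smul_smul, hcsucc]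
    congr 1
    field_simp
  have hAshift : Summable (fun k => A (k + 1)) := (summable_nat_add_iff 1).mpr hA_summable
  have hactS : act φ S = (-(2 * r)) • (S - A 0) := by
    have h1 : act φ S = ∑' k, act φ (A k) := by
      rw [← hLφ, hS, Lφ.map_tsum hA_summable]
      exact tsum_congr fun k => by rw [hLφ]
    rw [h1]
    have h2 : ∑' k, act φ (A k) = ∑' k, (-(2 * r)) • A (k + 1) :=
      tsum_congr fun k => hactA k
    rw [h2, Summable.tsum_const_smul _ hAshift]
    congr 1
    have := Summable.tsum_eq_zero_add hA_summable
    rw [hS]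
    rw [this]
    abel
  have hactφf : act φ f = (-(2 * r)) • A 0 := by
    rw [hAdef]
    simp only
    rw [show nupow φ 0 = φ from rfl, hc]
    simp only
    rw [smul_smul]
    have : (-(2 * r)) * ((-1 : ℝ) ^ (0 + 1) * ((2 * r)⁻¹) ^ (0 + 1)) = 1 := by
      rw [zero_add, pow_one, pow_one]
      field_simp
    rw [this, one_smul]
  constructor
  · -- the equation
    show (2 * r / (2 * r + 1)) • (((2 * r + 1) / (2 * r)) • (f + S))
      + (2 * r + 1)⁻¹ • act φ (((2 * r + 1) / (2 * r)) • (f + S)) = f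
    rw [act_rsmul, act_add, hactS, hactφf]
    match_scalars <;> field_simp <;> ring
  · -- the norm bound
    show ‖((2 * r + 1) / (2 * r)) • (f + S) - f‖ ≤ (2 * r + 1) / r * ‖act φ f - f‖
    set g : M := act φ f - f with hg
    set Bf : ℕ → M := fun j => c (j + 1) • act (nupow φ j) g with hBf
    -- linear map for nupow φ j
    have hact_sub : ∀ (ψ : B) (x y : M), act ψ (x - y) = act ψ x - act ψ y := by
      intro ψ x y
      obtain ⟨L, hL⟩ := mkL ψ
      rw [← hL, ← hL, ← hL, map_sub]
    have hBfA : ∀ j, Bf j = A (j + 1) + (2 * r)⁻¹ • A j := by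
      intro j
      rw [hBf]
      simp only
      rw [hg, hact_sub]
      have h1 : act (nupow φ j) (act φ f) = act (nupow φ (j + 1)) f := by
        rw [← mul_act, nupow_mul_self, show nupow φ (j+1) = φ * nupow φ j from rfl]
      rw [h1, smul_sub, hAdef]
      simp only [smul_smul]
      rw [hcsucc]
      module
    have hBf_bound : ∀ j, ‖Bf j‖ ≤ ((2 * r)⁻¹ * ‖g‖ / 2) * (1 / 2 : ℝ) ^ j := by
      intro j
      rw [hBf]
      simp only
      rw [norm_smul, Real.norm_eq_abs, habs]
      have hgF : ‖act (nupow φ j) g‖ ≤ r ^ (j + 1) * ‖g‖ := by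
        calc ‖act (nupow φ j) g‖ ≤ ‖nupow φ j‖ * ‖g‖ := norm_act _ _
          _ ≤ ‖φ‖ ^ (j + 1) * ‖g‖ :=
              mul_le_mul_of_nonneg_right (nupow_norm_le φ j) (norm_nonneg _)
          _ ≤ r ^ (j + 1) * ‖g‖ :=
              mul_le_mul_of_nonneg_right (pow_le_pow_left₀ (norm_nonneg _) hφ _) (norm_nonneg _)
      calc ((2 * r)⁻¹) ^ (j + 1 + 1) * ‖act (nupow φ j) g‖
          ≤ ((2 * r)⁻¹) ^ (j + 2) * (r ^ (j + 1) * ‖g‖) :=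
            mul_le_mul_of_nonneg_left hgF (pow_nonneg (inv_nonneg.mpr (le_of_lt h2r)) _)
        _ = ((2 * r)⁻¹ * ‖g‖ / 2) * (1 / 2 : ℝ) ^ j := by
            have h12 : ((2 * r)⁻¹ * r : ℝ) = 1 / 2 := by field_simp
            rw [show j + 2 = (j + 1) + 1 from rfl, pow_succ _ (j+1), mul_comm (((2*r)⁻¹)^(j+1)) ((2*r)⁻¹),
              mul_assoc, ← mul_assoc (((2*r)⁻¹)^(j+1)), ← mul_pow, h12]
            rw [pow_succ]
            ring
    have hBgeo : Summable (fun j : ℕ => ((2 * r)⁻¹ * ‖g‖ / 2) * (1 / 2 : ℝ) ^ j) :=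
      (summable_geometric_of_lt_one (by norm_num) (by norm_num)).mul_left _
    have hBf_norm_summable : Summable (fun j => ‖Bf j‖) :=
      Summable.of_nonneg_of_le (fun j => norm_nonneg _) hBf_bound hBgeo
    have hBf_summable : Summable Bf := hBf_norm_summable.of_norm
    -- the identity u - f = c 0 • g + ∑' Bf
    have hW : (∑' j, Bf j) = (S - A 0) + (2 * r)⁻¹ • S := by
      have h1 : (∑' j, Bf j) = ∑' j, (A (j + 1) + (2 * r)⁻¹ • A j) :=
        tsum_congr hBfA
      rw [h1, Summable.tsum_add hAshift (hA_summable.const_smul _),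
        Summable.tsum_const_smul _ hA_summable, ← hS]
      congr 1
      have := Summable.tsum_eq_zero_add hA_summable
      rw [hS, this]
      abel
    have hid : ((2 * r + 1) / (2 * r)) • (f + S) - f = c 0 • g + ∑' j, Bf j := by
      rw [hW, hg, hactφf]
      have hc0 : c 0 = -(2 * r)⁻¹ := by rw [hc]; simp
      rw [hc0]
      match_scalars <;> field_simp <;> ring
    rw [hid]
    have htsum_norm : ‖∑' j, Bf j‖ ≤ (2 * r)⁻¹ * ‖g‖ := by
      calc ‖∑' j, Bf j‖ ≤ ∑' j, ‖Bf j‖ := norm_tsum_le_tsum_norm hBf_norm_summable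
        _ ≤ ∑' j : ℕ, ((2 * r)⁻¹ * ‖g‖ / 2) * (1 / 2 : ℝ) ^ j :=
            Summable.tsum_le_tsum hBf_bound hBf_norm_summable hBgeo
        _ = ((2 * r)⁻¹ * ‖g‖ / 2) * (1 - 1/2)⁻¹ := by
            rw [tsum_mul_left, tsum_geometric_of_lt_one (by norm_num) (by norm_num)]
        _ = (2 * r)⁻¹ * ‖g‖ := by norm_num
    have hc0norm : ‖c 0 • g‖ = (2 * r)⁻¹ * ‖g‖ := by
      rw [norm_smul, Real.norm_eq_abs, habs]
      norm_num
    calc ‖c 0 • g + ∑' j, Bf j‖ ≤ ‖c 0 • g‖ + ‖∑' j, Bf j‖ := norm_add_le _ _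
      _ ≤ (2 * r)⁻¹ * ‖g‖ + (2 * r)⁻¹ * ‖g‖ := by rw [hc0norm]; linarith [htsum_norm]
      _ = r⁻¹ * ‖g‖ := by field_simp; ring
      _ ≤ (2 * r + 1) / r * ‖g‖ := by
          apply mul_le_mul_of_nonneg_right _ (norm_nonneg _)
          rw [inv_eq_one_div, div_le_div_iff₀ hr0 hr0]
          nlinarith
end

section
/- Let ψ ∈ 𝒮(ℝ^d) with ∫_{ℝ^d} ψ(x) dx = 1 and let f ∈ L²(ℝ^d). For ε > 0 define h_ε(x) = ∫_{ℝ^d} ψ(y) · (2π)^{d/2} ψ̂(εx − 2ε²y) · f(x − 2εy) dy − f(x), where ψ̂(ξ) = (2π)^{−d/2} ∫_{ℝ^d} ψ(x) e^{−i⟨x,ξ⟩} dx. Then h_ε ∈ L²(ℝ^d) for every ε > 0 and lim_{ε→0+} ‖h_ε‖_{L²(ℝ^d)} = 0. (This is the key limit in the proof that the mollifiers φ_ε(x,ξ) = (π/2)^{d/2} ε^{−2d} ψ(x/ε)ψ(ξ/ε) form an approximate identity for the twisted convolution acting on L²(ℝ^d): h_ε = (2π)^{d/2} Op^w(φ_ε)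 f̌ − f.) -/
open MeasureTheory Topology Filter
open scoped ENNReal NNReal

noncomputable section

/-- `ℝ^d`. -/
abbrev Ed (d : ℕ) := Fin d → ℝ

/-- The Fourier transform `ψ̂(ξ) = (2π)^{-d/2} ∫ ψ(x) e^{-i⟨x,ξ⟩} dx`. -/
def ftransform (d : ℕ) (ψ : Ed d → ℂ) (ξ : Ed d) : ℂ :=
  (((2 * Real.pi) ^ (-(d : ℝ) / 2) : ℝ) : ℂ) *
    ∫ x, ψ x * Complex.exp (-Complex.I * ((∑ i, x i * ξ i : ℝ) : ℂ))

/-- The function `h_ε(x) = ∫ ψ(y) (2π)^{d/2} ψ̂(εx − 2ε²y) f(x − 2εy) dy − f(x)`. -/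
def hEps (d : ℕ) (ψ : SchwartzMap (Ed d) ℂ) (f : Ed d → ℂ) (ε : ℝ) (x : Ed d) : ℂ :=
  (∫ y, ψ y * (((2 * Real.pi) ^ ((d : ℝ) / 2) : ℝ) : ℂ) *
      ftransform d (fun z => ψ z) (ε • x - (2 * ε ^ 2) • y) * f (x - (2 * ε) • y)) - f x

/-! ### Auxiliary lemmas -/

/-- Minkowski's integral inequality for `p = 2`, `ℝ≥0∞`-valued version. -/
lemma minkowski_L2 {α β : Type*} [MeasurableSpace α] [MeasurableSpace β]
    (μ : Measure α) (ν : Measure β) [SFinite μ] [SFinite ν]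
    (F : α → β → ℝ≥0∞) (hF : Measurable (Function.uncurry F)) :
    (∫⁻ x, (∫⁻ y, F x y ∂ν) ^ (2:ℝ) ∂μ) ^ (1/2:ℝ) ≤
      ∫⁻ y, (∫⁻ x, (F x y) ^ (2:ℝ) ∂μ) ^ (1/2:ℝ) ∂ν := by
  set A : β → ℝ≥0∞ := fun y => (∫⁻ x, (F x y) ^ (2:ℝ) ∂μ) ^ (1/2:ℝ) with hA
  have hFm : ∀ y, Measurable fun x => F x y := fun y =>
    hF.comp (measurable_id.prodMk measurable_const)
  have hFm' : ∀ x, Measurable (F x) := fun x =>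
    hF.comp (measurable_const.prodMk measurable_id)
  have hAm : Measurable A := by
    apply Measurable.pow_const
    exact Measurable.lintegral_prod_left
      (f := fun x y => F x y ^ (2:ℝ)) (hF.pow_const (2:ℝ))
  have hpq : Real.HolderConjugate 2 2 := Real.HolderConjugate.two_two
  have hsq : ∀ z : ℝ≥0∞, z ^ (2:ℝ) = z * z := fun z => by
    rw [show ((2:ℝ)) = ((2:ℕ):ℝ) by norm_num, ENNReal.rpow_natCast, sq]
  have key : (∫⁻ x, (∫⁻ y, F x y ∂ν) ^ (2:ℝ) ∂μ) ≤ (∫⁻ y, A y ∂ν) ^ (2:ℝ) := by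
    have h1 : ∀ x, (∫⁻ y, F x y ∂ν) ^ (2:ℝ) =
        ∫⁻ p : β × β, F x p.1 * F x p.2 ∂(ν.prod ν) := by
      intro x
      rw [hsq, lintegral_prod_mul (hFm' x).aemeasurable (hFm' x).aemeasurable]
    calc (∫⁻ x, (∫⁻ y, F x y ∂ν) ^ (2:ℝ) ∂μ)
        = ∫⁻ x, ∫⁻ p : β × β, F x p.1 * F x p.2 ∂(ν.prod ν) ∂μ := by
          exact lintegral_congr h1
      _ = ∫⁻ p : β × β, ∫⁻ x, F x p.1 * F x p.2 ∂μ ∂(ν.prod ν) := by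
          apply lintegral_lintegral_swap
          exact ((hF.comp ((measurable_fst).prodMk (measurable_fst.comp measurable_snd))).mul
            (hF.comp ((measurable_fst).prodMk (measurable_snd.comp measurable_snd)))).aemeasurable
      _ ≤ ∫⁻ p : β × β, A p.1 * A p.2 ∂(ν.prod ν) := by
          apply lintegral_mono fun p => ?_
          simpa [hA, one_div] using ENNReal.lintegral_mul_le_Lp_mul_Lq μ hpq
            (hFm p.1).aemeasurable (hFm p.2).aemeasurable
      _ = (∫⁻ y, A y ∂ν) * (∫⁻ y, A y ∂ν) := by
          exact lintegral_prod_mul hAm.aemeasurable hAm.aemeasurable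
      _ = (∫⁻ y, A y ∂ν) ^ (2:ℝ) := (hsq _).symm
  calc (∫⁻ x, (∫⁻ y, F x y ∂ν) ^ (2:ℝ) ∂μ) ^ (1/2:ℝ)
      ≤ ((∫⁻ y, A y ∂ν) ^ (2:ℝ)) ^ (1/2:ℝ) :=
        ENNReal.rpow_le_rpow key (by norm_num)
    _ = ∫⁻ y, A y ∂ν := by
        rw [← ENNReal.rpow_mul]; norm_num

lemma eLpNorm_two_eq {α : Type*} [MeasurableSpace α] (μ : Measure α) (g : α → ℂ) :
    eLpNorm g 2 μ = (∫⁻ x, (‖g x‖₊ : ℝ≥0∞) ^ (2:ℝ) ∂μ) ^ (1/2:ℝ) := by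
  rw [eLpNorm_eq_lintegral_rpow_enorm_toReal two_ne_zero ENNReal.ofNat_ne_top]
  norm_num
  rfl

/-- Minkowski's integral inequality in `eLpNorm` form, for `p = 2`. -/
lemma eLpNorm_integral_le_L2 {α β : Type*} [MeasurableSpace α] [MeasurableSpace β]
    (μ : Measure α) (ν : Measure β) [SFinite μ] [SFinite ν]
    (F : α → β → ℂ) (hF : StronglyMeasurable (Function.uncurry F)) :
    eLpNorm (fun x => ∫ y, F x y ∂ν) 2 μ ≤ ∫⁻ y, eLpNorm (fun x => F x y) 2 μ ∂ν := by
  rw [eLpNorm_two_eq]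
  have step1 : (∫⁻ x, (‖∫ y, F x y ∂ν‖₊ : ℝ≥0∞) ^ (2:ℝ) ∂μ) ^ (1/2:ℝ) ≤
      (∫⁻ x, (∫⁻ y, (‖F x y‖₊ : ℝ≥0∞) ∂ν) ^ (2:ℝ) ∂μ) ^ (1/2:ℝ) := by
    apply ENNReal.rpow_le_rpow ?_ (by norm_num)
    apply lintegral_mono fun x => ?_
    exact ENNReal.rpow_le_rpow (enorm_integral_le_lintegral_enorm _) (by norm_num)
  refine step1.trans ?_
  have := minkowski_L2 μ ν (fun x y => (‖F x y‖₊ : ℝ≥0∞)) hF.measurable.nnnorm.coe_nnreal_ennreal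
  refine this.trans ?_
  apply le_of_eq
  apply lintegral_congr fun y => ?_
  rw [eLpNorm_two_eq]

lemma exp_norm_one (t : ℝ) : ‖Complex.exp (-Complex.I * (t : ℂ))‖ = 1 := by
  rw [Complex.norm_exp]
  simp [Complex.mul_re]

lemma ftransform_norm_le {d : ℕ} (ψ : SchwartzMap (Ed d) ℂ) (ξ : Ed d) :
    ‖ftransform d (fun z => ψ z) ξ‖ ≤ (2 * Real.pi) ^ (-(d:ℝ) / 2) * ∫ x, ‖ψ x‖ := by
  rw [ftransform, norm_mul]
  have h1 : ‖(((2 * Real.pi) ^ (-(d : ℝ) / 2) : ℝ) : ℂ)‖ = (2 * Real.pi) ^ (-(d:ℝ) / 2) := by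
    rw [Complex.norm_real, Real.norm_eq_abs, abs_of_pos]
    positivity
  rw [h1]
  gcongr
  refine (norm_integral_le_integral_norm _).trans (le_of_eq ?_)
  apply integral_congr_ae
  filter_upwards with x
  rw [norm_mul, exp_norm_one, mul_one]

lemma ftransform_continuous {d : ℕ} (ψ : SchwartzMap (Ed d) ℂ) :
    Continuous (ftransform d (fun z => ψ z)) := by
  apply Continuous.mul continuous_const
  apply continuous_of_dominated (bound := fun x => ‖ψ x‖)
  · intro ξ
    apply Continuous.aestronglyMeasurable
    exact ψ.continuous.mul (Complex.continuous_exp.comp (by fun_prop))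
  · intro ξ
    filter_upwards with x
    rw [norm_mul, exp_norm_one, mul_one]
  · exact ψ.integrable.norm
  · filter_upwards with x
    exact continuous_const.mul (Complex.continuous_exp.comp (by fun_prop))

lemma ftransform_zero {d : ℕ} (ψ : SchwartzMap (Ed d) ℂ) (hψ : (∫ x, ψ x) = 1) :
    ftransform d (fun z => ψ z) 0 = (((2 * Real.pi) ^ (-(d:ℝ) / 2) : ℝ) : ℂ) := by
  rw [ftransform]
  have h : ∀ x : Ed d,
      (ψ x : ℂ) * Complex.exp (-Complex.I * ((∑ i, x i * (0:Ed d) i : ℝ) : ℂ)) = ψ x := by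
    intro x; simp
  rw [integral_congr_ae (Eventually.of_forall h), hψ, mul_one]

/-- A pointwise scalar bound gives an `eLpNorm` bound. -/
lemma eLpNorm_le_of_norm_le {α : Type*} [MeasurableSpace α] {μ : Measure α}
    {w : α → ℂ} {h : α → ℂ} {M : ℝ} (hM : 0 ≤ M)
    (hb : ∀ x, ‖w x‖ ≤ M * ‖h x‖) :
    eLpNorm w 2 μ ≤ ENNReal.ofReal M * eLpNorm h 2 μ := by
  have h1 : eLpNorm w 2 μ ≤ eLpNorm (fun x => M * ‖h x‖) 2 μ :=
    eLpNorm_mono_real hb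
  have h2 : eLpNorm (fun x => M * ‖h x‖) 2 μ = ‖M‖₊ • eLpNorm (fun x => ‖h x‖) 2 μ :=
    eLpNorm_const_smul (M : ℝ) (fun x => ‖h x‖) 2 μ
  rw [h2, eLpNorm_norm] at h1
  refine h1.trans (le_of_eq ?_)
  rw [ENNReal.smul_def, smul_eq_mul]
  congr 1
  exact Real.enorm_eq_ofReal hM

/-- Membership in `L²` is preserved by composing with a nonzero scaling. -/
lemma memℒp_comp_smul {d : ℕ} {h : Ed d → ℂ} (hm : StronglyMeasurable h)
    (hh : MemLp h 2 (volume : Measure (Ed d))) {r : ℝ} (hr : r ≠ 0) :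
    MemLp (fun y => h (r • y)) 2 (volume : Measure (Ed d)) := by
  have hsm : Measurable fun y : Ed d => r • y := by fun_prop
  refine ⟨(hm.comp_measurable hsm).aestronglyMeasurable, ?_⟩
  rw [eLpNorm_two_eq]
  have hmap : (volume : Measure (Ed d)).map (r • ·) =
      ENNReal.ofReal |(r ^ (Module.finrank ℝ (Ed d)))⁻¹| • (volume : Measure (Ed d)) :=
    Measure.map_addHaar_smul _ hr
  have hint : ∫⁻ y, (‖h (r • y)‖₊ : ℝ≥0∞) ^ (2:ℝ) ∂(volume : Measure (Ed d)) =
      ENNReal.ofReal |(r ^ (Module.finrank ℝ (Ed d)))⁻¹| *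
        ∫⁻ z, (‖h z‖₊ : ℝ≥0∞) ^ (2:ℝ) ∂(volume : Measure (Ed d)) := by
    rw [← lintegral_map (hm.measurable.nnnorm.coe_nnreal_ennreal.pow_const _) hsm, hmap,
      lintegral_smul_measure, smul_eq_mul]
  rw [hint]
  have hfin : ∫⁻ z, (‖h z‖₊ : ℝ≥0∞) ^ (2:ℝ) ∂(volume : Measure (Ed d)) ≠ ∞ := by
    have := hh.2
    rw [eLpNorm_two_eq] at this
    intro hcon
    rw [hcon] at this
    simp at this
  exact ENNReal.rpow_lt_top_of_nonneg (by norm_num)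
    (ENNReal.mul_ne_top ENNReal.ofReal_ne_top hfin)

/-- A Schwartz function is in `L²`. -/
lemma schwartz_memℒp_two {d : ℕ} (ψ : SchwartzMap (Ed d) ℂ) :
    MemLp (fun y => (ψ y : ℂ)) 2 (volume : Measure (Ed d)) := by
  refine (memLp_two_iff_integrable_sq_norm ψ.continuous.aestronglyMeasurable).mpr ?_
  have hC : ∀ x, ‖ψ x‖ ≤ (SchwartzMap.seminorm ℝ 0 0) ψ := fun x => by
    simpa using ψ.le_seminorm ℝ 0 0 x
  refine Integrable.mono' (ψ.integrable.norm.const_mul ((SchwartzMap.seminorm ℝ 0 0) ψ)) ?_ ?_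
  · exact (ψ.continuous.norm.pow 2).aestronglyMeasurable
  · filter_upwards with x
    rw [Real.norm_eq_abs, abs_of_nonneg (by positivity), sq]
    exact mul_le_mul_of_nonneg_right (hC x) (norm_nonneg _)

set_option maxHeartbeats 2000000 in
/-- **Statement 17.** The key `L²` limit showing that the rescaled Gaussian-type
mollifiers form an approximate identity for the twisted convolution on `L²`: for
`ψ ∈ 𝒮(ℝ^d)` with `∫ψ = 1` and `f ∈ L²(ℝ^d)`, the functions `h_ε` are in `L²` and
`‖h_ε‖_{L²} → 0` as `ε → 0⁺`. -/
theorem stmt_17 (d : ℕ) (ψ : SchwartzMap (Ed d) ℂ) (hψ : (∫ x, ψ x) = 1)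
    (f : Ed d → ℂ) (hf : MemLp f 2 volume) :
    (∀ ε : ℝ, 0 < ε → MemLp (hEps d ψ f ε) 2 volume) ∧
    Filter.Tendsto (fun ε : ℝ => eLpNorm (hEps d ψ f ε) 2 volume) (𝓝[>] 0) (𝓝 0) := by
  classical
  obtain ⟨f', hf'm, hff'⟩ : ∃ f' : Ed d → ℂ, StronglyMeasurable f' ∧ f =ᵐ[volume] f' :=
    ⟨hf.1.mk f, hf.1.stronglyMeasurable_mk, hf.1.ae_eq_mk⟩
  have hf'2 : MemLp f' 2 volume := hf.ae_eq hff'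
  have hfe : eLpNorm f' 2 volume ≠ ∞ := hf'2.2.ne
  set c : ℝ := (2 * Real.pi) ^ ((d:ℝ)/2) with hc
  set K : Ed d → ℂ := fun ξ => (c:ℂ) * ftransform d (fun z => ψ z) ξ with hK
  set M : ℝ := ∫ x, ‖ψ x‖ with hM
  have hM0 : 0 ≤ M := integral_nonneg fun x => norm_nonneg _
  have h2pi : (0:ℝ) < 2 * Real.pi := by positivity
  have hcpos : (0:ℝ) < c := Real.rpow_pos_of_pos h2pi _
  have hcr : c * (2 * Real.pi) ^ (-(d:ℝ)/2) = 1 := by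
    rw [hc, ← Real.rpow_add h2pi]
    have hz : (d:ℝ)/2 + -(d:ℝ)/2 = 0 := by ring
    rw [hz, Real.rpow_zero]
  have hKb : ∀ ξ, ‖K ξ‖ ≤ M := by
    intro ξ
    calc ‖K ξ‖ = c * ‖ftransform d (fun z => ψ z) ξ‖ := by
          rw [hK, norm_mul, Complex.norm_real, Real.norm_eq_abs, abs_of_pos hcpos]
      _ ≤ c * ((2 * Real.pi) ^ (-(d:ℝ) / 2) * M) :=
          mul_le_mul_of_nonneg_left (ftransform_norm_le ψ ξ) hcpos.le
      _ = c * (2 * Real.pi) ^ (-(d:ℝ) / 2) * M := by ring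
      _ = M := by rw [show -(d:ℝ) / 2 = -(d:ℝ)/2 from rfl, hcr, one_mul]
  have hKc : Continuous K := continuous_const.mul (ftransform_continuous ψ)
  have hK0 : K 0 = 1 := by
    have h1 : K 0 = (c:ℂ) * ftransform d (fun z => ψ z) 0 := rfl
    rw [h1, ftransform_zero ψ hψ, ← Complex.ofReal_mul, hcr, Complex.ofReal_one]
  set g : ℝ → Ed d → Ed d → ℂ :=
    fun ε y x => K (ε • x - (2 * ε ^ 2) • y) * f' (x - (2 * ε) • y) - f' x with hg
  -- measurability facts
  have hGm : ∀ ε : ℝ, StronglyMeasurable fun p : Ed d × Ed d => g ε p.2 p.1 := by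
    intro ε
    apply StronglyMeasurable.sub
    · apply StronglyMeasurable.mul
      · exact (hKc.comp
          (by fun_prop : Continuous fun p : Ed d × Ed d =>
            ε • p.1 - (2 * ε ^ 2) • p.2)).stronglyMeasurable
      · exact hf'm.comp_measurable
          (by fun_prop : Measurable fun p : Ed d × Ed d => p.1 - (2 * ε) • p.2)
    · exact hf'm.comp_measurable measurable_fst
  have hΨGm : ∀ ε : ℝ,
      StronglyMeasurable (Function.uncurry fun x y : Ed d => (ψ y : ℂ) * g ε y x) := fun ε =>
    ((ψ.continuous.comp continuous_snd).stronglyMeasurable).mul (hGm ε)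
  have hgaesm : ∀ (ε : ℝ) (y : Ed d), AEStronglyMeasurable (g ε y) volume := by
    intro ε y
    apply StronglyMeasurable.aestronglyMeasurable
    apply StronglyMeasurable.sub
    · exact ((hKc.comp (by fun_prop : Continuous fun x : Ed d =>
        ε • x - (2 * ε ^ 2) • y)).stronglyMeasurable).mul
        (hf'm.comp_measurable (by fun_prop : Measurable fun x : Ed d => x - (2 * ε) • y))
    · exact hf'm
  have htrans : ∀ v : Ed d,
      eLpNorm (fun x => f' (x - v)) 2 (volume : Measure (Ed d)) = eLpNorm f' 2 volume := by
    intro v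
    exact eLpNorm_comp_measurePreserving hf'2.1 (measurePreserving_sub_right volume v)
  set B : ℝ≥0∞ := (ENNReal.ofReal M + 1) * eLpNorm f' 2 volume with hB
  have hBne : B ≠ ∞ :=
    ENNReal.mul_ne_top (ENNReal.add_ne_top.mpr ⟨ENNReal.ofReal_ne_top, ENNReal.one_ne_top⟩) hfe
  have hPbound : ∀ (ε : ℝ) (y : Ed d) (w : Ed d → ℂ),
      (∀ x, ‖w x‖ ≤ M * ‖w x‖) → True := fun _ _ _ _ => trivial
  have hgb : ∀ (ε : ℝ) (y : Ed d), eLpNorm (g ε y) 2 volume ≤ B := by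
    intro ε y
    have hP : eLpNorm (fun x => K (ε • x - (2 * ε ^ 2) • y) * f' (x - (2 * ε) • y)) 2
        (volume : Measure (Ed d)) ≤ ENNReal.ofReal M * eLpNorm f' 2 volume := by
      have := eLpNorm_le_of_norm_le (μ := (volume : Measure (Ed d))) hM0
        (w := fun x => K (ε • x - (2 * ε ^ 2) • y) * f' (x - (2 * ε) • y))
        (h := fun x => f' (x - (2 * ε) • y))
        (fun x => by
          rw [norm_mul]
          exact mul_le_mul_of_nonneg_right (hKb _) (norm_nonneg _))
      rwa [htrans] at this
    have h1 : eLpNorm (g ε y) 2 volume ≤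
        eLpNorm (fun x => K (ε • x - (2 * ε ^ 2) • y) * f' (x - (2 * ε) • y)) 2 volume +
          eLpNorm f' 2 volume := by
      have : g ε y = fun x =>
          (K (ε • x - (2 * ε ^ 2) • y) * f' (x - (2 * ε) • y)) - f' x := rfl
      rw [this]
      exact eLpNorm_sub_le (((hKc.comp (by fun_prop : Continuous fun x : Ed d =>
        ε • x - (2 * ε ^ 2) • y)).stronglyMeasurable).mul
        (hf'm.comp_measurable (by fun_prop : Measurable fun x : Ed d =>
          x - (2 * ε) • y))).aestronglyMeasurable hf'2.1 one_le_two
    refine h1.trans ?_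
    rw [hB, add_mul, one_mul]
    exact add_le_add_left hP _
  have hmeasy : ∀ ε : ℝ, Measurable fun y => eLpNorm (g ε y) 2 (volume : Measure (Ed d)) := by
    intro ε
    have hrw : (fun y => eLpNorm (g ε y) 2 (volume : Measure (Ed d))) = fun y =>
        (∫⁻ x, (‖g ε y x‖₊ : ℝ≥0∞) ^ (2:ℝ) ∂(volume : Measure (Ed d))) ^ (1/2:ℝ) := by
      funext y
      exact eLpNorm_two_eq _ _
    rw [hrw]
    apply Measurable.pow_const
    exact Measurable.lintegral_prod_left
      (f := fun x y => (‖g ε y x‖₊ : ℝ≥0∞) ^ (2:ℝ))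
      ((hGm ε).measurable.nnnorm.coe_nnreal_ennreal.pow_const _)
  have hΨl1 : ∫⁻ y, (‖ψ y‖₊ : ℝ≥0∞) ∂(volume : Measure (Ed d)) ≠ ∞ :=
    (ψ.integrable (μ := volume)).2.ne
  have hΨme : Measurable fun y : Ed d => (‖ψ y‖₊ : ℝ≥0∞) :=
    ψ.continuous.measurable.nnnorm.coe_nnreal_ennreal
  have hU : ∀ ε : ℝ, eLpNorm (fun x => ∫ y, (ψ y : ℂ) * g ε y x) 2 volume ≤
      ∫⁻ y, (‖ψ y‖₊ : ℝ≥0∞) * eLpNorm (g ε y) 2 volume ∂volume := by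
    intro ε
    refine (eLpNorm_integral_le_L2 volume volume _ (hΨGm ε)).trans (le_of_eq ?_)
    apply lintegral_congr fun y => ?_
    have h1 : (fun x => (ψ y : ℂ) * g ε y x) = (ψ y : ℂ) • (g ε y) := rfl
    rw [h1, eLpNorm_const_smul]
    rfl
  -- the identity
  have hid : ∀ ε : ℝ, 0 < ε →
      hEps d ψ f ε =ᵐ[volume] fun x => ∫ y, (ψ y : ℂ) * g ε y x := by
    intro ε hε
    have h2ε : (2 * ε) ≠ 0 := by positivity
    have hTq : Measure.QuasiMeasurePreserving
        (fun p : Ed d × Ed d => p.1 - (2 * ε) • p.2)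
        ((volume : Measure (Ed d)).prod volume) volume := by
      have hs : Measure.QuasiMeasurePreserving
          (fun p : Ed d × Ed d => (p.1, (2 * ε) • p.2))
          ((volume : Measure (Ed d)).prod volume) ((volume : Measure (Ed d)).prod volume) := by
        constructor
        · fun_prop
        · have heq : (fun p : Ed d × Ed d => (p.1, (2 * ε) • p.2)) =
              Prod.map (id : Ed d → Ed d) ((2 * ε) • ·) := rfl
          rw [heq, ← Measure.map_prod_map _ _ measurable_id (by fun_prop), Measure.map_id,
            Measure.map_addHaar_smul _ h2ε]
          exact Measure.AbsolutelyContinuous.prod (Measure.AbsolutelyContinuous.rfl)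
            Measure.smul_absolutelyContinuous
      have hsub : Measure.QuasiMeasurePreserving (fun p : Ed d × Ed d => p.1 - p.2)
          ((volume : Measure (Ed d)).prod volume) volume :=
        quasiMeasurePreserving_sub volume volume
      exact hsub.comp hs
    have hae2 : ∀ᵐ x ∂(volume : Measure (Ed d)), ∀ᵐ y ∂(volume : Measure (Ed d)),
        f (x - (2 * ε) • y) = f' (x - (2 * ε) • y) := by
      have h := hTq.ae_eq hff'
      exact Measure.ae_ae_of_ae_prod h
    have hint : ∀ x : Ed d, Integrable
        (fun y => (ψ y : ℂ) * (K (ε • x - (2 * ε ^ 2) • y) * f' (x - (2 * ε) • y)))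
        (volume : Measure (Ed d)) := by
      intro x
      have hstepm : StronglyMeasurable fun z : Ed d => f' (x - z) :=
        hf'm.comp_measurable (by fun_prop)
      have hstep : MemLp (fun z : Ed d => f' (x - z)) 2 volume := by
        refine ⟨hstepm.aestronglyMeasurable, ?_⟩
        have heq : (fun z : Ed d => f' (x - z)) = f' ∘ (fun z : Ed d => x - z) := rfl
        have hmp : MeasurePreserving (fun t : Ed d => x - t) volume volume := by
          have h := (measurePreserving_add_left (volume : Measure (Ed d)) x).comp
            (Measure.measurePreserving_neg (volume : Measure (Ed d)))
          simpa [Function.comp_def, sub_eq_add_neg] using h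
        rw [heq, eLpNorm_comp_measurePreserving hf'2.1 hmp]
        exact hf'2.2
      have hmem : MemLp (fun y : Ed d => f' (x - (2 * ε) • y)) 2 volume := by
        have := memℒp_comp_smul hstepm hstep h2ε
        exact this
      have hb : MemLp (fun y : Ed d => ‖ψ y‖ * ‖f' (x - (2 * ε) • y)‖) 1 volume := by
        have hpqr : (1:ℝ≥0∞)/1 = 1/2 + 1/2 := by
          rw [ENNReal.div_add_div_same, one_add_one_eq_two,
            ENNReal.div_self two_ne_zero ENNReal.ofNat_ne_top]
          simp
        have := MemLp.smul (hmem.norm) ((schwartz_memℒp_two ψ).norm)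
          (p := 2) (q := 2) (r := 1) (hpqr := ⟨by rw [ENNReal.inv_two_add_inv_two, inv_one]⟩)
        exact this
      have hbi : Integrable (fun y : Ed d => M * (‖ψ y‖ * ‖f' (x - (2 * ε) • y)‖)) volume :=
        (memLp_one_iff_integrable.mp hb).const_mul M
      refine Integrable.mono' hbi ?_ ?_
      · exact ((ψ.continuous.stronglyMeasurable).mul
          (((hKc.comp (by fun_prop : Continuous fun y : Ed d =>
            ε • x - (2 * ε ^ 2) • y)).stronglyMeasurable).mul
            (hf'm.comp_measurable
              (by fun_prop : Measurable fun y : Ed d => x - (2 * ε) • y)))).aestronglyMeasurable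
      · filter_upwards with y
        rw [norm_mul, norm_mul]
        calc ‖(ψ y : ℂ)‖ * (‖K (ε • x - (2 * ε ^ 2) • y)‖ * ‖f' (x - (2 * ε) • y)‖)
            ≤ ‖(ψ y : ℂ)‖ * (M * ‖f' (x - (2 * ε) • y)‖) := by
              apply mul_le_mul_of_nonneg_left ?_ (norm_nonneg _)
              exact mul_le_mul_of_nonneg_right (hKb _) (norm_nonneg _)
          _ = M * (‖(ψ y : ℂ)‖ * ‖f' (x - (2 * ε) • y)‖) := by ring
      -- done
    filter_upwards [hff', hae2] with x hfx hyae
    simp only [hEps]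
    have e1 : (∫ y, ψ y * (((2 * Real.pi) ^ ((d : ℝ) / 2) : ℝ) : ℂ) *
        ftransform d (fun z => ψ z) (ε • x - (2 * ε ^ 2) • y) * f (x - (2 * ε) • y))
        = ∫ y, (ψ y : ℂ) * (K (ε • x - (2 * ε ^ 2) • y) * f' (x - (2 * ε) • y)) := by
      apply integral_congr_ae
      filter_upwards [hyae] with y hy
      rw [hy, hK]
      push_cast [hc]
      ring
    have e2 : (f x : ℂ) = ∫ y, (ψ y : ℂ) * f' x := by
      rw [integral_mul_const, hψ, one_mul, hfx]
    rw [e1, e2, ← integral_sub (hint x) (ψ.integrable.mul_const (f' x))]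
    apply integral_congr_ae
    filter_upwards with y
    rw [hg, mul_sub]
  -- membership in L²
  have hmem : ∀ ε : ℝ, 0 < ε → MemLp (hEps d ψ f ε) 2 volume := by
    intro ε hε
    have hae := hid ε hε
    have haesm : AEStronglyMeasurable (fun x => ∫ y, (ψ y : ℂ) * g ε y x) volume :=
      (StronglyMeasurable.integral_prod_right (hΨGm ε)).aestronglyMeasurable
    refine ⟨haesm.congr hae.symm, ?_⟩
    rw [eLpNorm_congr_ae hae]
    refine lt_of_le_of_lt (hU ε) ?_
    refine lt_of_le_of_lt (lintegral_mono fun y => mul_le_mul_right (hgb ε y) _) ?_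
    rw [lintegral_mul_const _ hΨme]
    exact ENNReal.mul_lt_top hΨl1.lt_top hBne.lt_top
  refine ⟨hmem, ?_⟩
  -- translation continuity in L²
  have tcont : Tendsto (fun v : Ed d =>
      eLpNorm (fun x => f' (x - v) - f' x) 2 (volume : Measure (Ed d))) (𝓝 0) (𝓝 0) := by
    set F₂ : Lp ℂ 2 (volume : Measure (Ed d)) := hf'2.toLp f' with hF₂
    set gC : Ed d → C(Ed d, Ed d) := fun v => ⟨fun x => x - v, continuous_id.sub continuous_const⟩ with hgC
    have hgCmp : ∀ v : Ed d, MeasurePreserving (gC v) volume volume := fun v =>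
      measurePreserving_sub_right volume v
    have hgCc : Continuous gC := by
      apply ContinuousMap.continuous_of_continuous_uncurry
      exact continuous_snd.sub continuous_fst
    have hTc : Continuous fun v : Ed d =>
        Lp.compMeasurePreserving (μ := (volume : Measure (Ed d))) (gC v) (hgCmp v) F₂ :=
      Continuous.compMeasurePreservingLp continuous_const hgCc hgCmp (by norm_num)
    have hcoe : ∀ v : Ed d,
        ⇑(Lp.compMeasurePreserving (μ := (volume : Measure (Ed d))) (gC v) (hgCmp v) F₂)
          =ᵐ[volume] fun x => f' (x - v) := by
      intro v
      refine (Lp.coeFn_compMeasurePreserving F₂ (hgCmp v)).trans ?_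
      exact (hgCmp v).quasiMeasurePreserving.ae_eq (hf'2.coeFn_toLp)
    have hT0 : Lp.compMeasurePreserving (μ := (volume : Measure (Ed d))) (gC 0) (hgCmp 0) F₂
        = F₂ := by
      apply Lp.ext
      refine (hcoe 0).trans ?_
      refine (hf'2.coeFn_toLp).symm.mono fun x hx => ?_
      simpa using hx
    have hTt : Tendsto (fun v : Ed d =>
        Lp.compMeasurePreserving (μ := (volume : Measure (Ed d))) (gC v) (hgCmp v) F₂)
        (𝓝 0) (𝓝 F₂) := by
      have := hTc.tendsto 0
      rwa [hT0] at this
    have hed : Tendsto (fun v : Ed d =>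
        edist (Lp.compMeasurePreserving (μ := (volume : Measure (Ed d)))
          (gC v) (hgCmp v) F₂) F₂) (𝓝 0) (𝓝 0) := by
      have h := hTt.edist (tendsto_const_nhds (x := F₂))
      simpa using h
    have hident : ∀ v : Ed d,
        edist (Lp.compMeasurePreserving (μ := (volume : Measure (Ed d)))
          (gC v) (hgCmp v) F₂) F₂ =
        eLpNorm (fun x => f' (x - v) - f' x) 2 (volume : Measure (Ed d)) := by
      intro v
      rw [Lp.edist_def]
      apply eLpNorm_congr_ae
      filter_upwards [hcoe v, hf'2.coeFn_toLp] with x hx1 hx2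
      simp only [Pi.sub_apply, hx1, hx2]
      rw [hF₂, hx2]
    have : (fun v : Ed d => eLpNorm (fun x => f' (x - v) - f' x) 2
        (volume : Measure (Ed d))) = fun v =>
        edist (Lp.compMeasurePreserving (μ := (volume : Measure (Ed d)))
          (gC v) (hgCmp v) F₂) F₂ := by
      funext v
      exact (hident v).symm
    rw [this]
    exact hed
  -- pointwise (in y) convergence of the L² norms
  have hgt : ∀ y : Ed d, Tendsto (fun ε : ℝ => eLpNorm (g ε y) 2 volume)
      (𝓝[>] (0:ℝ)) (𝓝 0) := by
    intro y
    have hA : Tendsto (fun ε : ℝ => ENNReal.ofReal M *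
        eLpNorm (fun x => f' (x - (2 * ε) • y) - f' x) 2 (volume : Measure (Ed d)))
        (𝓝[>] (0:ℝ)) (𝓝 0) := by
      have hv : Tendsto (fun ε : ℝ => (2 * ε) • y) (𝓝[>] (0:ℝ)) (𝓝 (0 : Ed d)) := by
        have hcont : Continuous fun ε : ℝ => (2 * ε) • y := by fun_prop
        have h0 : Tendsto (fun ε : ℝ => (2 * ε) • y) (𝓝 0) (𝓝 (0 : Ed d)) := by
          have := hcont.tendsto 0
          simpa using this
        exact h0.mono_left nhdsWithin_le_nhds
      have h1 := tcont.comp hv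
      have h2 := ENNReal.Tendsto.const_mul h1 (Or.inr (ENNReal.ofReal_ne_top (r := M)))
      simpa using h2
    have hfin2 : ∫⁻ x, (‖f' x‖₊ : ℝ≥0∞) ^ (2:ℝ) ∂(volume : Measure (Ed d)) ≠ ∞ := by
      have h := hf'2.2
      rw [eLpNorm_two_eq] at h
      intro hcon
      rw [hcon] at h
      simp at h
    have hQ : Tendsto (fun ε : ℝ =>
        eLpNorm (fun x => (K (ε • x - (2 * ε ^ 2) • y) - 1) * f' x) 2
          (volume : Measure (Ed d))) (𝓝[>] (0:ℝ)) (𝓝 0) := by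
      have hlim : Tendsto (fun ε : ℝ => ∫⁻ x,
          (‖(K (ε • x - (2 * ε ^ 2) • y) - 1) * f' x‖₊ : ℝ≥0∞) ^ (2:ℝ)
            ∂(volume : Measure (Ed d))) (𝓝[>] (0:ℝ)) (𝓝 0) := by
        have h0 : (𝓝 (0:ℝ≥0∞)) = 𝓝 (∫⁻ x : Ed d, (0:ℝ≥0∞) ∂volume) := by simp
        rw [h0]
        apply tendsto_lintegral_filter_of_dominated_convergence
          (bound := fun x => (ENNReal.ofReal (M + 1)) ^ (2:ℝ) * (‖f' x‖₊ : ℝ≥0∞) ^ (2:ℝ))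
        · apply Eventually.of_forall fun ε => ?_
          apply Measurable.pow_const
          apply Measurable.coe_nnreal_ennreal
          apply Measurable.nnnorm
          exact (((hKc.comp (by fun_prop : Continuous fun x : Ed d =>
            ε • x - (2 * ε ^ 2) • y)).measurable).sub measurable_const).mul hf'm.measurable
        · apply Eventually.of_forall fun ε => ?_
          apply Eventually.of_forall fun x => ?_
          have hb1 : (‖(K (ε • x - (2 * ε ^ 2) • y) - 1) * f' x‖₊ : ℝ≥0∞) ≤
              ENNReal.ofReal (M + 1) * (‖f' x‖₊ : ℝ≥0∞) := by
            rw [nnnorm_mul, ENNReal.coe_mul]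
            apply mul_le_mul_left
            rw [← enorm_eq_nnnorm, ← ofReal_norm]
            apply ENNReal.ofReal_le_ofReal
            calc ‖K (ε • x - (2 * ε ^ 2) • y) - 1‖
                ≤ ‖K (ε • x - (2 * ε ^ 2) • y)‖ + ‖(1:ℂ)‖ := norm_sub_le _ _
              _ ≤ M + 1 := by
                  have := hKb (ε • x - (2 * ε ^ 2) • y)
                  simp only [norm_one]
                  linarith
          calc (‖(K (ε • x - (2 * ε ^ 2) • y) - 1) * f' x‖₊ : ℝ≥0∞) ^ (2:ℝ)
              ≤ (ENNReal.ofReal (M + 1) * (‖f' x‖₊ : ℝ≥0∞)) ^ (2:ℝ) :=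
                ENNReal.rpow_le_rpow hb1 (by norm_num)
            _ = (ENNReal.ofReal (M + 1)) ^ (2:ℝ) * (‖f' x‖₊ : ℝ≥0∞) ^ (2:ℝ) :=
                ENNReal.mul_rpow_of_nonneg _ _ (by norm_num)
        · rw [lintegral_const_mul' _ _ (by
            exact ENNReal.rpow_ne_top_of_nonneg (by norm_num) ENNReal.ofReal_ne_top)]
          exact ENNReal.mul_ne_top
            (ENNReal.rpow_ne_top_of_nonneg (by norm_num) ENNReal.ofReal_ne_top) hfin2
        · apply Eventually.of_forall fun x => ?_
          have hz : Tendsto (fun ε : ℝ => (K (ε • x - (2 * ε ^ 2) • y) - 1) * f' x)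
              (𝓝[>] (0:ℝ)) (𝓝 0) := by
            have hcont : Continuous fun ε : ℝ =>
                (K (ε • x - (2 * ε ^ 2) • y) - 1) * f' x :=
              (((hKc.comp (by fun_prop)).sub continuous_const).mul continuous_const)
            have h0 := hcont.tendsto 0
            have hval : (K ((0:ℝ) • x - (2 * (0:ℝ) ^ 2) • y) - 1) * f' x = 0 := by
              simp [hK0]
            rw [hval] at h0
            exact h0.mono_left nhdsWithin_le_nhds
          have h1 : Tendsto (fun ε : ℝ =>
              (‖(K (ε • x - (2 * ε ^ 2) • y) - 1) * f' x‖₊ : ℝ≥0∞))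
              (𝓝[>] (0:ℝ)) (𝓝 0) := by
            have := (ENNReal.tendsto_coe (f := 𝓝[>] (0:ℝ))).mpr hz.nnnorm
            simpa using this
          have h2 := (ENNReal.continuous_rpow_const (y := (2:ℝ))).tendsto 0 |>.comp h1
          simpa [ENNReal.zero_rpow_of_pos, Function.comp_def] using h2
      have hrw : (fun ε : ℝ => eLpNorm (fun x => (K (ε • x - (2 * ε ^ 2) • y) - 1) * f' x) 2
          (volume : Measure (Ed d))) = fun ε =>
          (∫⁻ x, (‖(K (ε • x - (2 * ε ^ 2) • y) - 1) * f' x‖₊ : ℝ≥0∞) ^ (2:ℝ)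
            ∂(volume : Measure (Ed d))) ^ (1/2:ℝ) := by
        funext ε
        exact eLpNorm_two_eq _ _
      rw [hrw]
      have h3 := (ENNReal.continuous_rpow_const (y := (1/2:ℝ))).tendsto 0 |>.comp hlim
      simpa [ENNReal.zero_rpow_of_pos, Function.comp_def] using h3
    have hsplit : ∀ ε : ℝ, eLpNorm (g ε y) 2 volume ≤
        ENNReal.ofReal M *
          eLpNorm (fun x => f' (x - (2 * ε) • y) - f' x) 2 (volume : Measure (Ed d)) +
        eLpNorm (fun x => (K (ε • x - (2 * ε ^ 2) • y) - 1) * f' x) 2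
          (volume : Measure (Ed d)) := by
      intro ε
      have hdecomp : g ε y = fun x =>
          (K (ε • x - (2 * ε ^ 2) • y) * (f' (x - (2 * ε) • y) - f' x)) +
          ((K (ε • x - (2 * ε ^ 2) • y) - 1) * f' x) := by
        funext x
        rw [hg]
        ring
      rw [hdecomp]
      have haP : AEStronglyMeasurable
          (fun x => K (ε • x - (2 * ε ^ 2) • y) * (f' (x - (2 * ε) • y) - f' x)) volume :=
        (((hKc.comp (by fun_prop : Continuous fun x : Ed d =>
          ε • x - (2 * ε ^ 2) • y)).stronglyMeasurable).mul
          ((hf'm.comp_measurable (by fun_prop : Measurable fun x : Ed d =>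
            x - (2 * ε) • y)).sub hf'm)).aestronglyMeasurable
      have haQ : AEStronglyMeasurable
          (fun x => (K (ε • x - (2 * ε ^ 2) • y) - 1) * f' x) volume :=
        ((((hKc.comp (by fun_prop : Continuous fun x : Ed d =>
          ε • x - (2 * ε ^ 2) • y)).stronglyMeasurable).sub
            stronglyMeasurable_const).mul hf'm).aestronglyMeasurable
      refine (eLpNorm_add_le haP haQ one_le_two).trans ?_
      apply add_le_add_left
      exact eLpNorm_le_of_norm_le hM0 fun x => by
        rw [norm_mul]
        exact mul_le_mul_of_nonneg_right (hKb _) (norm_nonneg _)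
    refine tendsto_of_tendsto_of_tendsto_of_le_of_le' tendsto_const_nhds ?_
      (Eventually.of_forall fun ε => zero_le) (Eventually.of_forall hsplit)
    have := hA.add hQ
    simpa using this
  -- dominated convergence in y
  have hUt : Tendsto (fun ε : ℝ =>
      ∫⁻ y, (‖ψ y‖₊ : ℝ≥0∞) * eLpNorm (g ε y) 2 volume ∂volume) (𝓝[>] (0:ℝ)) (𝓝 0) := by
    have h0 : (𝓝 (0:ℝ≥0∞)) = 𝓝 (∫⁻ y : Ed d, (0:ℝ≥0∞) ∂volume) := by simp
    rw [h0]
    apply tendsto_lintegral_filter_of_dominated_convergence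
      (bound := fun y => (‖ψ y‖₊ : ℝ≥0∞) * B)
    · exact Eventually.of_forall fun ε => hΨme.mul (hmeasy ε)
    · exact Eventually.of_forall fun ε =>
        Eventually.of_forall fun y => mul_le_mul_right (hgb ε y) _
    · rw [lintegral_mul_const _ hΨme]
      exact ENNReal.mul_ne_top hΨl1 hBne
    · apply Eventually.of_forall fun y => ?_
      have := ENNReal.Tendsto.const_mul (hgt y) (Or.inr (ENNReal.coe_ne_top (r := ‖ψ y‖₊)))
      simpa using this
  refine tendsto_of_tendsto_of_tendsto_of_le_of_le' tendsto_const_nhds hUt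
    (Eventually.of_forall fun ε => zero_le) ?_
  filter_upwards [self_mem_nhdsWithin] with ε hε
  rw [eLpNorm_congr_ae (hid ε hε)]
  exact hU ε

end
end
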